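/- Every transitive tournament kernel is 0–1 valued: if W is a tournament kernel on a probability space (S, μ) and W is transitive, then W(x,y) ∈ {0, 1} for (μ×μ)-almost every (x,y) ∈ S×S. -/

import Mathlib

open MeasureTheory

/-- A tournament kernel on a probability space `(S, μ)`. -/
def IsTournamentKernel {S : Type*} [MeasurableSpace S] (μ : Measure S)
    (W : S → S → ℝ) : Prop :=
  Measurable (Function.uncurry W) ∧ (∀ x y : S, 0 ≤ W x y ∧ W x y ≤ 1) ∧
  (∀ᵐ p ∂(μ.prod μ), W p.1 p.2 + W p.2 p.1 = 1)

/-!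
Suppose `W(x, y)` and `W(x, z)` are both strictly between `0` and `1`. Then `W(x, z) > 0` and
`W(z, x) > 0`, so transitivity through `z` forces either `W(x, y) = 1` (if `W(z, y) > 0`) or
`W(y, x) = 1` (if `W(z, y) = 0`, so `W(y, z) = 1`). Hence for almost every `x` the section
`A_x = {y | W(x, y) ∉ {0, 1}}` satisfies `μ(A_x)² = (μ × μ)(A_x × A_x) = 0`, and Fubini shows
that the set of pairs `(x, y)` with `W(x, y) ∉ {0, 1}` is null.
-/

theorem eq_zero_or_eq_one_of_trans_triple {S : Type*} {W : S → S → ℝ} {x y z : S}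
    (hW : ∀ a b, 0 ≤ W a b ∧ W a b ≤ 1)
    (hxy : W x y + W y x = 1) (hxz : W x z + W z x = 1) (hyz : W y z + W z y = 1)
    (hxzy : 0 < W x z → 0 < W z y → W x y = 1) (hyzx : 0 < W y z → 0 < W z x → W y x = 1)
    (hxz01 : ¬(W x z = 0 ∨ W x z = 1)) : W x y = 0 ∨ W x y = 1 := by
  push Not at hxz01
  have hxz_pos : 0 < W x z := (hW x z).1.lt_of_ne' hxz01.1
  have hzx_pos : 0 < W z x := by linarith [(hW x z).2.lt_of_ne hxz01.2]
  rcases (hW z y).1.lt_or_eq with hzy_pos | hzy_zero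
  · exact Or.inr (hxzy hxz_pos hzy_pos)
  · have := hyzx (by linarith) hzx_pos
    exact Or.inl (by linarith)

namespace MeasureTheory.Measure

variable {S : Type*} [MeasurableSpace S] {μ : Measure S} [SigmaFinite μ]

theorem ae_prod_prod_of_ae_pi_fin_three {P : S → S → S → Prop}
    (h : ∀ᵐ x ∂(Measure.pi fun _ : Fin 3 => μ), P (x 0) (x 1) (x 2)) :
    ∀ᵐ q ∂μ.prod (μ.prod μ), P q.1 q.2.1 q.2.2 := by
  have hmp : MeasurePreserving
      (fun q : S × S × S => (MeasurableEquiv.piFinSuccAbove (fun _ : Fin 3 => S) 0).symm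
        (q.1, MeasurableEquiv.finTwoArrow.symm q.2))
      (μ.prod (μ.prod μ)) (Measure.pi fun _ : Fin 3 => μ) :=
    ((measurePreserving_piFinSuccAbove (fun _ : Fin 3 => μ) 0).symm _).comp
      ((MeasurePreserving.id μ).prod ((measurePreserving_finTwoArrow μ).symm _))
  filter_upwards [hmp.quasiMeasurePreserving.ae h] with q hq
  exact hq

theorem ae_prod_prod_of_ae_prod {P : S × S → Prop} (h : ∀ᵐ p ∂μ.prod μ, P p) :
    ∀ᵐ q ∂μ.prod (μ.prod μ), P (q.1, q.2.1) :=
  (quasiMeasurePreserving_fst.comp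
    ((measurePreserving_prodAssoc μ μ μ).symm _).quasiMeasurePreserving).ae h

theorem ae_prod_prod_swap_snd {P : S × S × S → Prop} (h : ∀ᵐ q ∂μ.prod (μ.prod μ), P q) :
    ∀ᵐ q ∂μ.prod (μ.prod μ), P (q.1, q.2.2, q.2.1) :=
  ((MeasurePreserving.id μ).prod measurePreserving_swap).quasiMeasurePreserving.ae h

theorem ae_prod_prod_rotate {P : S × S × S → Prop} (h : ∀ᵐ q ∂μ.prod (μ.prod μ), P q) :
    ∀ᵐ q ∂μ.prod (μ.prod μ), P (q.2.1, q.2.2, q.1) :=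
  ((measurePreserving_prodAssoc μ μ μ).comp measurePreserving_swap).quasiMeasurePreserving.ae h

theorem measure_prod_null_of_ae_mem_imp_notMem {A : Set (S × S)} (hA : MeasurableSet A)
    (h : ∀ᵐ q ∂μ.prod (μ.prod μ), (q.1, q.2.1) ∈ A → (q.1, q.2.2) ∉ A) :
    μ.prod μ A = 0 := by
  rw [measure_prod_null hA]
  filter_upwards [ae_ae_of_ae_prod h] with x hx
  have hsq : μ.prod μ ((Prod.mk x ⁻¹' A) ×ˢ (Prod.mk x ⁻¹' A)) = 0 :=
    measure_eq_zero_iff_ae_notMem.2 (by simpa using hx)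
  rw [prod_prod, mul_self_eq_zero] at hsq
  exact hsq

end MeasureTheory.Measure

/-- Every transitive tournament kernel is `{0,1}`-valued almost everywhere. -/
theorem stmt19 {S : Type*} [MeasurableSpace S] (μ : Measure S) [IsProbabilityMeasure μ]
    (W : S → S → ℝ) (hW : IsTournamentKernel μ W)
    (htrans : ∀ᵐ x ∂(Measure.pi fun _ : Fin 3 => μ),
      0 < W (x 0) (x 1) → 0 < W (x 1) (x 2) → W (x 0) (x 2) = 1) :
    ∀ᵐ p ∂(μ.prod μ), W p.1 p.2 = 0 ∨ W p.1 p.2 = 1 := by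
  obtain ⟨hmeas, hbd, hsum⟩ := hW
  have htrans3 := Measure.ae_prod_prod_of_ae_pi_fin_three
    (P := fun x y z => 0 < W x y → 0 < W y z → W x z = 1) htrans
  have hsum3 := Measure.ae_prod_prod_of_ae_prod hsum
  have hA : MeasurableSet {p : S × S | ¬(W p.1 p.2 = 0 ∨ W p.1 p.2 = 1)} :=
    ((measurableSet_eq_fun hmeas measurable_const).union
      (measurableSet_eq_fun hmeas measurable_const)).compl
  refine Measure.measure_prod_null_of_ae_mem_imp_notMem hA ?_
  filter_upwards [hsum3, Measure.ae_prod_prod_swap_snd hsum3,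
    Measure.ae_prod_prod_rotate hsum3, Measure.ae_prod_prod_swap_snd htrans3,
    Measure.ae_prod_prod_rotate htrans3] with q hxy hxz hyz hxzy hyzx
  exact fun hxy01 hxz01 =>
    hxy01 (eq_zero_or_eq_one_of_trans_triple hbd hxy hxz hyz hxzy hyzx hxz01)
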